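/- Let G be a finite group, μ : G → G → ℂ a factor system (|μ(f,g)| = 1 for all f,g; μ(e,f) = μ(f,e) = 1; and μ(h,f)μ(hf,g) = μ(h,fg)μ(f,g) for all f,g,h), B a nonempty finite index type, and W : G → Matrix B B ℂ. Define the projective regular representation R : G → Matrix G G ℂ by R(f)(g,k) = μ(g,f) if k = g·f and 0 otherwise, and set M := Σ_{f∈G} (R f) ⊗ (W f), a matrix indexed by G × B. Then M is unitary if and only if for every g ∈ G, Σ_{f∈G} conj(μ(f,g)) • ((W f)† · W(fg)) = (if g = e then I else 0). -/

import Mathlib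

/-!
Writing `M := ∑ f, R f ⊗ W f`, the entry of `M` at `((h, c), (g, a))` is `μ(h, h⁻¹g) W(h⁻¹g)_{ca}`.
Hence the entry of `Mᴴ M` at `((g, a), (k, b))` is a sum over `h`; substituting `f = h⁻¹g` and using
the cocycle identity together with `|μ| = 1` to rewrite `conj μ(h, f) μ(h, f x) = μ(g, x) conj μ(f, x)`
(with `x = g⁻¹k`), it equals `μ(g, x)` times the `(a, b)` entry of `∑ f, conj μ(f, x) W(f)ᴴ W(f x)`.
As `μ(1, x) = μ(g, 1) = 1`, comparing `Mᴴ M` with `1` entrywise is exactly the orthogonality condition.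
-/

open Matrix Kronecker

namespace ProjectiveRegular

variable {G : Type*} [Group G]

lemma star_mul_self_of_norm_eq_one {z : ℂ} (hz : ‖z‖ = 1) : star z * z = 1 := by
  rw [Complex.star_def, Complex.conj_mul', hz]
  norm_num

lemma star_mul_eq_mul_star {μ : G → G → ℂ} (hμabs : ∀ f g, ‖μ f g‖ = 1)
    (hμc : ∀ f g h : G, μ h f * μ (h * f) g = μ h (f * g) * μ f g) (h f g : G) :
    star (μ h f) * μ h (f * g) = μ (h * f) g * star (μ f g) := by
  linear_combination (-(star (μ h f) * μ h (f * g))) * star_mul_self_of_norm_eq_one (hμabs f g)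
    - star (μ f g) * star (μ h f) * hμc f g h
    + μ (h * f) g * star (μ f g) * star_mul_self_of_norm_eq_one (hμabs h f)

variable [DecidableEq G] {B : Type*}

def projRegRep (μ : G → G → ℂ) (f : G) : Matrix G G ℂ :=
  of fun g k => if k = g * f then μ g f else 0

lemma one_apply_mk_mul {α : Type*} [Zero α] [One α] [DecidableEq B] (g x : G) (a b : B) :
    (1 : Matrix (G × B) (G × B) α) (g, a) (g * x, b)
      = (if x = 1 then 1 else 0 : Matrix B B α) a b := by
  by_cases hx : x = 1 <;> simp [hx, one_apply, eq_comm (a := g)]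

variable [Fintype G]

lemma sum_projRegRep_kronecker_apply (μ : G → G → ℂ) (W : G → Matrix B B ℂ)
    (h g : G) (c a : B) :
    (∑ f, projRegRep μ f ⊗ₖ W f) (h, c) (g, a) = μ h (h⁻¹ * g) * W (h⁻¹ * g) c a := by
  rw [Matrix.sum_apply, Finset.sum_eq_single (h⁻¹ * g)]
  · simp [projRegRep]
  · intro f _ hf
    have hg : g ≠ h * f := fun hg => hf (by rw [hg, inv_mul_cancel_left])
    simp [projRegRep, hg]
  · simp

variable [Fintype B]

def twistedGram (μ : G → G → ℂ) (W : G → Matrix B B ℂ) (x : G) : Matrix B B ℂ :=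
  ∑ f, star (μ f x) • ((W f)ᴴ * W (f * x))

lemma star_mul_self_apply {μ : G → G → ℂ} (hμabs : ∀ f g, ‖μ f g‖ = 1)
    (hμc : ∀ f g h : G, μ h f * μ (h * f) g = μ h (f * g) * μ f g)
    (W : G → Matrix B B ℂ) (g x : G) (a b : B) :
    (star (∑ f, projRegRep μ f ⊗ₖ W f) * ∑ f, projRegRep μ f ⊗ₖ W f) (g, a) (g * x, b)
      = μ g x * twistedGram μ W x a b := by
  have hblock : ∀ h : G,
      ∑ c : B, star (μ h (h⁻¹ * g) * W (h⁻¹ * g) c a)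
          * (μ h (h⁻¹ * (g * x)) * W (h⁻¹ * (g * x)) c b)
        = μ g x * star (μ (h⁻¹ * g) x) * ((W (h⁻¹ * g))ᴴ * W (h⁻¹ * g * x)) a b := by
    intro h
    have hcoc := star_mul_eq_mul_star hμabs hμc h (h⁻¹ * g) x
    rw [mul_inv_cancel_left] at hcoc
    simp only [mul_apply, conjTranspose_apply, Finset.mul_sum, star_mul', ← mul_assoc]
    refine Finset.sum_congr rfl fun c _ => ?_
    linear_combination star (W (h⁻¹ * g) c a) * W (h⁻¹ * g * x) c b * hcoc
  rw [star_eq_conjTranspose, mul_apply, Fintype.sum_prod_type]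
  simp only [conjTranspose_apply, sum_projRegRep_kronecker_apply, hblock]
  rw [twistedGram, Matrix.sum_apply, Finset.mul_sum]
  exact Fintype.sum_equiv ((Equiv.inv G).trans (Equiv.mulRight g)) _ _ fun _ => by
    rw [Matrix.smul_apply, smul_eq_mul, mul_assoc]; rfl

end ProjectiveRegular

open ProjectiveRegular

theorem stmt_6_general {G : Type*} [Group G] [Fintype G] [DecidableEq G]
    (μ : G → G → ℂ)
    (hμabs : ∀ f g : G, ‖μ f g‖ = 1)
    (hμel : ∀ f : G, μ 1 f = 1) (hμer : ∀ f : G, μ f 1 = 1)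
    (hμc : ∀ f g h : G, μ h f * μ (h * f) g = μ h (f * g) * μ f g)
    {B : Type*} [Fintype B] [DecidableEq B]
    (W : G → Matrix B B ℂ)
    (R : G → Matrix G G ℂ)
    (hR : ∀ f g k : G, R f g k = if k = g * f then μ g f else 0) :
    (∑ f : G, (R f) ⊗ₖ (W f)) ∈ Matrix.unitaryGroup (G × B) ℂ ↔
      ∀ g : G, ∑ f : G, star (μ f g) • ((W f)ᴴ * W (f * g))
        = if g = 1 then (1 : Matrix B B ℂ) else 0 := by
  obtain rfl : R = projRegRep μ := funext fun f => ext fun g k => hR f g k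
  have hgram := star_mul_self_apply hμabs hμc W
  rw [mem_unitaryGroup_iff']
  constructor
  · intro hU x
    ext a b
    have := hgram 1 x a b
    rw [hU, one_apply_mk_mul, hμel, one_mul] at this
    exact this.symm
  · intro hT
    ext ⟨g, a⟩ ⟨k, b⟩
    obtain ⟨x, rfl⟩ : ∃ x, k = g * x := ⟨g⁻¹ * k, (mul_inv_cancel_left g k).symm⟩
    rw [hgram, one_apply_mk_mul, twistedGram, hT x]
    split_ifs with hx
    · rw [hx, hμer, one_mul]
    · rw [Matrix.zero_apply, mul_zero]

theorem stmt_6 {G : Type*} [Group G] [Fintype G] [DecidableEq G]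
    (μ : G → G → ℂ)
    (hμabs : ∀ f g : G, ‖μ f g‖ = 1)
    (hμel : ∀ f : G, μ 1 f = 1) (hμer : ∀ f : G, μ f 1 = 1)
    (hμc : ∀ f g h : G, μ h f * μ (h * f) g = μ h (f * g) * μ f g)
    {B : Type*} [Fintype B] [DecidableEq B] [Nonempty B]
    (W : G → Matrix B B ℂ)
    (R : G → Matrix G G ℂ)
    (hR : ∀ f g k : G, R f g k = if k = g * f then μ g f else 0) :
    (∑ f : G, (R f) ⊗ₖ (W f)) ∈ Matrix.unitaryGroup (G × B) ℂ ↔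
      ∀ g : G, ∑ f : G, star (μ f g) • ((W f)ᴴ * W (f * g))
        = if g = 1 then (1 : Matrix B B ℂ) else 0 :=
  stmt_6_general μ hμabs hμel hμer hμc W R hR
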